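/- arXiv:1308.4207 — 3 statements merged into one kernel-verified Lean document; each statement's English description precedes it below -/
import Mathlib

section
/- In a spherical tiling by angle congruent pentagons, the total number of angle occurrences not appearing at degree-3 vertices is at most Σ_{k≥4} k v_k, and 2f - Σ_{k≥4} k v_k = 24 + Σ_{k≥4} 3(k-4) v_k > 0; hence at most one angle of the pentagon (counted with multiplicity) fails to appear at degree-3 vertices. -/
open Finset

/-! Each vertex of degree `k ≥ 4` contributes `4(k-3) = 3(k-4) + k` to `2f - 24`, so
`2f = 24 + ∑ 3(k-4) vₖ + ∑ k vₖ` exceeds the number `∑ k vₖ` of angle slots at high degree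
vertices. These slots must hold all `m·f` occurrences of the angles missing at degree-3 vertices,
so `m f < 2 f`, i.e. `m ≤ 1`. -/

theorem sum_four_mul_sub_three_mul_eq {s : Finset ℕ} (hs : ∀ k ∈ s, 4 ≤ k) (v : ℕ → ℕ) :
    4 * ∑ k ∈ s, (k - 3) * v k = ∑ k ∈ s, 3 * (k - 4) * v k + ∑ k ∈ s, k * v k := by
  rw [mul_sum, ← sum_add_distrib]
  refine sum_congr rfl fun k hk => ?_
  have hk4 := hs k hk
  rw [← mul_assoc, show 4 * (k - 3) = 3 * (k - 4) + k by omega, add_mul]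

theorem Nat.le_one_of_mul_le_of_lt_two_mul {m f S : ℕ} (hm : m * f ≤ S) (hS : S < 2 * f) :
    m ≤ 1 := by
  by_contra! h
  have : 2 * f ≤ m * f := Nat.mul_le_mul_right f h
  omega

/-- In a spherical tiling by angle congruent pentagons, if `m` angles of the pentagon
(counted with multiplicity) fail to appear at degree-3 vertices, then all their
`m·f` occurrences lie among the `∑_{k≥4} k·vk` angle slots at high degree vertices.
Since `2f = (24 + ∑_{k≥4} 3(k-4) vk) + ∑_{k≥4} k·vk`, i.e.
`2f - ∑_{k≥4} k·vk = 24 + ∑_{k≥4} 3(k-4) vk > 0`, we get `m ≤ 1`. -/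
theorem stmt_5 (f m N : ℕ) (vk : ℕ → ℕ)
    (hf : f = 12 + 2 * ∑ k ∈ Finset.Icc 4 N, (k - 3) * vk k)
    (hm : m * f ≤ ∑ k ∈ Finset.Icc 4 N, k * vk k) :
    2 * f = (24 + ∑ k ∈ Finset.Icc 4 N, 3 * (k - 4) * vk k)
      + ∑ k ∈ Finset.Icc 4 N, k * vk k ∧ m ≤ 1 := by
  have hsum := sum_four_mul_sub_three_mul_eq (s := Icc 4 N) (fun k hk => (mem_Icc.mp hk).1) vk
  have heq : 2 * f = (24 + ∑ k ∈ Icc 4 N, 3 * (k - 4) * vk k) + ∑ k ∈ Icc 4 N, k * vk k := by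
    omega
  exact ⟨heq, Nat.le_one_of_mul_le_of_lt_two_mul hm (by omega)⟩
end

section
/- Let α = 2π/3 and β one of 4π/9, π/2, 2π/5 (corresponding to the extra vertex αβ³, β⁴, or β⁵). Among the pentagons αⁿβ^{5−n} (0 ≤ n ≤ 5), the angle sum equation nα + (5−n)β = 3π + 4π/f yields an even integer f ≥ 16 only for n = 4, giving f = 36, 24, 60 respectively. -/
/-!
Dividing the angle sum equation by `π` turns it into `f · e = 4`, where `e` is the excess
of the angle sum over `3π`, measured in units of `π`. Since `f ≥ 16`, this forces
`0 < e ≤ 1/4`, and for each of the three values of `β` the only pentagon with excess in that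
range is `α⁴β`.
-/

open Real

/-- The angle sum of the pentagon `αⁿβ^{5−n}`, with `α = 2π/3` and `β = bπ`, minus `3π`,
in units of `π`. -/
noncomputable def pentagonExcess (b : ℝ) (n : ℕ) : ℝ :=
  n * (2 / 3) + ((5 - n : ℕ) : ℝ) * b - 3

lemma angle_sum_eq_iff_mul_pentagonExcess {n f : ℕ} {β b : ℝ} (hf : f ≠ 0)
    (hβ : β = b * π) :
    (n : ℝ) * (2 * π / 3) + ((5 - n : ℕ) : ℝ) * β = 3 * π + 4 * π / f ↔
      (f : ℝ) * pentagonExcess b n = 4 := by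
  have hf' : (f : ℝ) ≠ 0 := Nat.cast_ne_zero.mpr hf
  have hsum : (n : ℝ) * (2 * π / 3) + ((5 - n : ℕ) : ℝ) * β - (3 * π + 4 * π / f)
      = ((f : ℝ) * pentagonExcess b n - 4) * (π / f) := by
    rw [hβ, pentagonExcess]
    field_simp
    ring
  rw [← sub_eq_zero, hsum, mul_eq_zero, sub_eq_zero,
    or_iff_left (div_ne_zero pi_ne_zero hf')]

lemma pos_and_le_of_mul_eq_four {f : ℕ} {e : ℝ} (hf : 16 ≤ f) (h : (f : ℝ) * e = 4) :
    0 < e ∧ e ≤ 1 / 4 := by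
  have hf' : (16 : ℝ) ≤ f := by exact_mod_cast hf
  constructor <;> nlinarith

lemma mul_pentagonExcess_eq_four_iff {b : ℝ} {n f F : ℕ} (hn : n ≤ 5) (hf : 16 ≤ f)
    (hb : ∀ m ≤ 5, m ≠ 4 → pentagonExcess b m ≤ 0 ∨ 1 / 4 < pentagonExcess b m)
    (hF : (F : ℝ) * pentagonExcess b 4 = 4) :
    (f : ℝ) * pentagonExcess b n = 4 ↔ n = 4 ∧ f = F := by
  constructor
  · intro h
    obtain ⟨hpos, hle⟩ := pos_and_le_of_mul_eq_four hf h
    obtain rfl : n = 4 := by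
      by_contra hn4
      rcases hb n hn hn4 with h' | h' <;> linarith
    refine ⟨rfl, ?_⟩
    exact_mod_cast mul_right_cancel₀ hpos.ne' (h.trans hF.symm)
  · rintro ⟨rfl, rfl⟩
    exact hF

theorem stmt_16_general (n f : ℕ) (hn : n ≤ 5) (hf : 16 ≤ f) :
    (((n : ℝ) * (2 * Real.pi / 3) + ((5 - n : ℕ) : ℝ) * (4 * Real.pi / 9)
        = 3 * Real.pi + 4 * Real.pi / (f : ℝ)) ↔ (n = 4 ∧ f = 36))
    ∧ (((n : ℝ) * (2 * Real.pi / 3) + ((5 - n : ℕ) : ℝ) * (Real.pi / 2)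
        = 3 * Real.pi + 4 * Real.pi / (f : ℝ)) ↔ (n = 4 ∧ f = 24))
    ∧ (((n : ℝ) * (2 * Real.pi / 3) + ((5 - n : ℕ) : ℝ) * (2 * Real.pi / 5)
        = 3 * Real.pi + 4 * Real.pi / (f : ℝ)) ↔ (n = 4 ∧ f = 60)) := by
  have hf0 : f ≠ 0 := by omega
  have classify : ∀ {β : ℝ} (b : ℝ) (F : ℕ), β = b * π →
      (∀ m ≤ 5, m ≠ 4 → pentagonExcess b m ≤ 0 ∨ 1 / 4 < pentagonExcess b m) →
      (F : ℝ) * pentagonExcess b 4 = 4 →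
      ((n : ℝ) * (2 * π / 3) + ((5 - n : ℕ) : ℝ) * β = 3 * π + 4 * π / f ↔
        n = 4 ∧ f = F) :=
    fun b _ hβ hb hF => (angle_sum_eq_iff_mul_pentagonExcess hf0 hβ).trans
      (mul_pentagonExcess_eq_four_iff hn hf hb hF)
  refine ⟨classify (4 / 9) 36 (by ring) ?_ (by norm_num [pentagonExcess]),
    classify (1 / 2) 24 (by ring) ?_ (by norm_num [pentagonExcess]),
    classify (2 / 5) 60 (by ring) ?_ (by norm_num [pentagonExcess])⟩ <;>
  · intro m hm hm4
    interval_cases m <;> first | contradiction | norm_num [pentagonExcess]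

/-- Let `α = 2π/3` and `β` be one of `4π/9`, `π/2`, `2π/5` (corresponding to the
extra vertex `αβ³`, `β⁴` or `β⁵`).  Among the pentagons `αⁿβ^{5−n}` with
`0 ≤ n ≤ 5`, the angle sum equation `nα + (5−n)β = 3π + 4π/f` admits an even
integer `f ≥ 16` only for `n = 4`, giving `f = 36, 24, 60` respectively. -/
theorem stmt_16 (n f : ℕ) (hn : n ≤ 5) (hf : 16 ≤ f) (heven : 2 ∣ f) :
    (((n : ℝ) * (2 * Real.pi / 3) + ((5 - n : ℕ) : ℝ) * (4 * Real.pi / 9)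
        = 3 * Real.pi + 4 * Real.pi / (f : ℝ)) ↔ (n = 4 ∧ f = 36))
    ∧ (((n : ℝ) * (2 * Real.pi / 3) + ((5 - n : ℕ) : ℝ) * (Real.pi / 2)
        = 3 * Real.pi + 4 * Real.pi / (f : ℝ)) ↔ (n = 4 ∧ f = 24))
    ∧ (((n : ℝ) * (2 * Real.pi / 3) + ((5 - n : ℕ) : ℝ) * (2 * Real.pi / 5)
        = 3 * Real.pi + 4 * Real.pi / (f : ℝ)) ↔ (n = 4 ∧ f = 60)) :=
  stmt_16_general n f hn hf
end

section
/- Suppose α, β, γ, δ > 0 satisfy α + 2β = 2π, γ = 2π/3, δ = 2π/5, and α > β (hence α > 2π/3, β < 2π/3). Then for non-negative integers a, b, c, d with a + b + c + d ≥ 4, 2a > b, and aα + bβ + cγ + dδ = 2π, the only possibility is (a,b,c,d) = (1,0,0,3). -/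
/-- Suppose `α, β, γ, δ > 0` satisfy `α + 2β = 2π`, `γ = 2π/3`, `δ = 2π/5` and
`α > β` (hence `α > 2π/3` and `β < 2π/3`).  Then for non-negative integers
`a, b, c, d` with `a + b + c + d ≥ 4` and `2a > b` satisfying
`aα + bβ + cγ + dδ = 2π`, the only possibility is `(a,b,c,d) = (1,0,0,3)`. -/
theorem stmt_18 (α β γ δ : ℝ) (hα : 0 < α) (hβ : 0 < β)
    (hab : α + 2 * β = 2 * Real.pi)
    (hγ : γ = 2 * Real.pi / 3) (hδ : δ = 2 * Real.pi / 5)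
    (hgt : β < α)
    (a b c d : ℕ) (hdeg : 4 ≤ a + b + c + d) (h2a : b < 2 * a)
    (hsum : (a : ℝ) * α + (b : ℝ) * β + (c : ℝ) * γ + (d : ℝ) * δ = 2 * Real.pi) :
    a = 1 ∧ b = 0 ∧ c = 0 ∧ d = 3 := by
  have hπ := Real.pi_pos
  subst hγ hδ
  have hβlt : β < 2 * Real.pi / 3 := by linarith
  have hba : (b : ℝ) < 2 * a := by exact_mod_cast h2a
  have hpos : (0:ℝ) < 2 * a - b := by linarith
  have hkey : (2 * (a:ℝ) - b) * β =
      ((a:ℝ) - 1) * (2 * Real.pi) + c * (2 * Real.pi / 3) + d * (2 * Real.pi / 5) := by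
    linear_combination (a:ℝ) * hab - hsum
  have hr1 : 0 < ((a:ℝ) - 1) * (2 * Real.pi) + c * (2 * Real.pi / 3) + d * (2 * Real.pi / 5) :=
    hkey ▸ mul_pos hpos hβ
  have hr2 : ((a:ℝ) - 1) * (2 * Real.pi) + c * (2 * Real.pi / 3) + d * (2 * Real.pi / 5)
      < (2 * (a:ℝ) - b) * (2 * Real.pi / 3) := by
    rw [← hkey]
    exact mul_lt_mul_of_pos_left hβlt hpos
  have e1 : 15 < 15 * a + 5 * c + 3 * d := by
    by_contra h
    push_neg at h
    have : (15 * (a:ℝ) + 5 * c + 3 * d) ≤ 15 := by exact_mod_cast h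
    nlinarith
  have e2 : 5 * a + 5 * b + 5 * c + 3 * d < 15 := by
    by_contra h
    push_neg at h
    have : (15:ℝ) ≤ 5 * a + 5 * b + 5 * c + 3 * d := by exact_mod_cast h
    nlinarith
  omega
end
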